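/- The Petersen graph has no even perfect matching: for every perfect matching E of the Petersen graph, some cycle of the complement G − E has odd length. -/

import Mathlib

/-! Relabelling the ground set `Fin 5` is an automorphism of the Petersen graph, so we may
assume that the perfect matching `M` contains the edges `{01, 23}` and `{04, 12}`. These force
`{34, 02}`, `{13, 24}` and `{14, 03}` into `M`, which is then the set of spokes of the pentagon
`02 – 13 – 04 – 23 – 14`; that pentagon survives in `G − M`. -/

/-- The Petersen graph as the Kneser graph K(5,2): vertices are 2-element subsets of a
5-element set, with edges between disjoint subsets. -/
def petersenGraph : SimpleGraph {s : Finset (Fin 5) // s.card = 2} where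
  Adj a b := Disjoint a.1 b.1
  symm := ⟨fun a b h => h.symm⟩
  loopless := ⟨by
    intro a h
    rw [disjoint_self] at h
    have h2 := a.2
    rw [h] at h2
    simp at h2⟩

namespace SimpleGraph

variable {V W : Type*} {G : SimpleGraph V} {G' : SimpleGraph W}

theorem cycleGraph_isContained_of_adj {n : ℕ} (c : Fin (n + 2) → V) (hc : Function.Injective c)
    (hadj : ∀ i, G.Adj (c i) (c (i + 1))) : cycleGraph (n + 2) ⊑ G := by
  refine ⟨⟨⟨c, fun {i j} hij => ?_⟩, hc⟩⟩
  rcases cycleGraph_adj.mp hij with h | h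
  · simpa [sub_eq_iff_eq_add'.mp h] using (hadj j).symm
  · simpa [sub_eq_iff_eq_add'.mp h] using hadj i

namespace Subgraph

variable {M : G.Subgraph} {u v w x w₁ w₂ w₃ x₁ x₂ : V}

theorem IsPerfectMatching.map_iso (e : G ≃g G') (hM : M.IsPerfectMatching) :
    (M.map e.toHom).IsPerfectMatching :=
  ⟨(Iso.isMatching_map e).mpr hM.1, fun v => ⟨e.symm v, hM.2 _, by simp⟩⟩

theorem IsPerfectMatching.adj_of_forall_adj (hM : M.IsPerfectMatching)
    (hu : ∀ w, G.Adj u w → w = w₁ ∨ w = w₂ ∨ w = w₃)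
    (h₁ : M.Adj w₁ x₁) (hx₁ : x₁ ≠ u) (h₂ : M.Adj w₂ x₂) (hx₂ : x₂ ≠ u) : M.Adj u w₃ := by
  obtain ⟨w, hw, -⟩ := hM.1 (hM.2 u)
  rcases hu w (M.adj_sub hw) with rfl | rfl | rfl
  · exact absurd (hM.1.eq_of_adj_left h₁ hw.symm) hx₁
  · exact absurd (hM.1.eq_of_adj_left h₂ hw.symm) hx₂
  · exact hw

theorem IsMatching.deleteEdges_adj (hM : M.IsMatching) (hvw : G.Adj v w) (hvx : M.Adj v x)
    (hxw : x ≠ w) : (G.deleteEdges M.edgeSet).Adj v w :=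
  SimpleGraph.deleteEdges_adj.mpr
    ⟨hvw, fun h => hM.not_adj_left_of_ne hxw hvx (Subgraph.mem_edgeSet.mp h)⟩

end Subgraph

theorem deleteEdges_edgeSet_map_isContained (e : G ≃g G') (M : G.Subgraph) :
    G'.deleteEdges (M.map e.toHom).edgeSet ⊑ G.deleteEdges M.edgeSet := by
  refine ⟨⟨⟨e.symm, fun {a b} hab => ?_⟩, e.symm.injective⟩⟩
  rw [deleteEdges_adj, Subgraph.mem_edgeSet] at hab ⊢
  exact ⟨e.symm.map_adj_iff.mpr hab.1, fun h => hab.2 ⟨_, _, h, by simp, by simp⟩⟩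

end SimpleGraph

open SimpleGraph

instance : DecidableRel petersenGraph.Adj :=
  fun a b => inferInstanceAs (Decidable (Disjoint a.1 b.1))

namespace Petersen

def pair (a b : Fin 5) (h : a ≠ b := by decide) : {s : Finset (Fin 5) // s.card = 2} :=
  ⟨{a, b}, Finset.card_pair h⟩

def relabel (σ : Equiv.Perm (Fin 5)) : petersenGraph ≃g petersenGraph where
  toEquiv := σ.finsetCongr.subtypeEquiv fun s => by simp
  map_rel_iff' := Finset.disjoint_map _

variable {M : petersenGraph.Subgraph}

theorem cycleGraph_five_isContained_of_adj_of_adj (hM : M.IsPerfectMatching)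
    (h₁ : M.Adj (pair 0 1) (pair 2 3)) (h₂ : M.Adj (pair 0 4) (pair 1 2)) :
    cycleGraph 5 ⊑ petersenGraph.deleteEdges M.edgeSet := by
  have h₃ : M.Adj (pair 3 4) (pair 0 2) :=
    hM.adj_of_forall_adj (w₁ := pair 0 1) (w₂ := pair 1 2) (by decide) h₁ (by decide) h₂.symm
      (by decide)
  have h₄ : M.Adj (pair 1 3) (pair 2 4) :=
    hM.adj_of_forall_adj (w₁ := pair 0 2) (w₂ := pair 0 4) (by decide) h₃.symm (by decide) h₂
      (by decide)
  have h₅ : M.Adj (pair 1 4) (pair 0 3) :=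
    hM.adj_of_forall_adj (w₁ := pair 0 2) (w₂ := pair 2 3) (by decide) h₃.symm (by decide)
      h₁.symm (by decide)
  refine cycleGraph_isContained_of_adj ![pair 0 2, pair 1 3, pair 0 4, pair 2 3, pair 1 4]
    (by decide) fun i => ?_
  fin_cases i
  · exact hM.1.deleteEdges_adj (by decide) h₃.symm (by decide)
  · exact hM.1.deleteEdges_adj (by decide) h₄ (by decide)
  · exact hM.1.deleteEdges_adj (by decide) h₂ (by decide)
  · exact hM.1.deleteEdges_adj (by decide) h₁.symm (by decide)
  · exact hM.1.deleteEdges_adj (by decide) h₅ (by decide)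

theorem cycleGraph_five_isContained_of_adj (hM : M.IsPerfectMatching)
    (h₁ : M.Adj (pair 0 1) (pair 2 3)) :
    cycleGraph 5 ⊑ petersenGraph.deleteEdges M.edgeSet := by
  obtain ⟨w, hw, -⟩ := hM.1 (hM.2 (pair 0 4))
  have hN : ∀ w, petersenGraph.Adj (pair 0 4) w → w = pair 1 2 ∨ w = pair 1 3 ∨ w = pair 2 3 := by
    decide
  rcases hN w (M.adj_sub hw) with rfl | rfl | rfl
  · exact cycleGraph_five_isContained_of_adj_of_adj hM h₁ hw
  · exact (cycleGraph_five_isContained_of_adj_of_adj (hM.map_iso (relabel (Equiv.swap 2 3)))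
      ⟨_, _, h₁, by decide, by decide⟩ ⟨_, _, hw, by decide, by decide⟩).trans
      (deleteEdges_edgeSet_map_isContained _ M)
  · exact absurd (hM.1.eq_of_adj_left h₁.symm hw.symm) (by decide)

theorem cycleGraph_five_isContained (hM : M.IsPerfectMatching) :
    cycleGraph 5 ⊑ petersenGraph.deleteEdges M.edgeSet := by
  obtain ⟨w, hw, -⟩ := hM.1 (hM.2 (pair 0 1))
  have hN : ∀ w, petersenGraph.Adj (pair 0 1) w → w = pair 2 3 ∨ w = pair 2 4 ∨ w = pair 3 4 := by
    decide
  rcases hN w (M.adj_sub hw) with rfl | rfl | rfl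
  · exact cycleGraph_five_isContained_of_adj hM hw
  · exact (cycleGraph_five_isContained_of_adj (hM.map_iso (relabel (Equiv.swap 3 4)))
      ⟨_, _, hw, by decide, by decide⟩).trans (deleteEdges_edgeSet_map_isContained _ M)
  · exact (cycleGraph_five_isContained_of_adj (hM.map_iso (relabel (Equiv.swap 2 4)))
      ⟨_, _, hw, by decide, by decide⟩).trans (deleteEdges_edgeSet_map_isContained _ M)

end Petersen

/-- the Petersen graph has no even perfect matching: for every perfect
matching `M`, some cycle of the complement `G − M` has odd length. -/
theorem petersen_no_even_perfect_matching
    (M : petersenGraph.Subgraph) (hM : M.IsPerfectMatching) :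
    ∃ (v : {s : Finset (Fin 5) // s.card = 2})
      (p : (petersenGraph.deleteEdges M.edgeSet).Walk v v),
      p.IsCycle ∧ Odd p.length := by
  obtain ⟨v, p, hp, hlen⟩ := (cycleGraph_isContained_iff (by norm_num)).mp
    (Petersen.cycleGraph_five_isContained hM)
  exact ⟨v, p, hp, by rw [hlen]; decide⟩
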